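/- Let C be a nonempty convex subset of a strictly convex real normed space E and T : C → E a nonexpansive mapping. Then the fixed point set Fix(T) = {x ∈ C : T x = x} is convex. -/
import Mathlib


/-- The fixed point set of a nonexpansive mapping on a nonempty convex subset
of a strictly convex real normed space is convex. -/
theorem stmt10 {E : Type*} [NormedAddCommGroup E] [NormedSpace ℝ E]
    [StrictConvexSpace ℝ E]
    (C : Set E) (hC : C.Nonempty) (hCconv : Convex ℝ C)
    (T : E → E)
    (hT : ∀ x ∈ C, ∀ y ∈ C, ‖T x - T y‖ ≤ ‖x - y‖) :
    Convex ℝ {x ∈ C | T x = x} := by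
  rintro x ⟨hxC, hx⟩ y ⟨hyC, hy⟩ a b ha hb hab
  set z := a • x + b • y with hz
  have hzC : z ∈ C := hCconv hxC hyC ha hb hab
  have hzseg : z ∈ segment ℝ x y := ⟨a, b, ha, hb, hab, rfl⟩
  refine ⟨hzC, ?_⟩
  by_cases hxy : x = y
  · have hzx : z = x := by
      rw [hz, hxy, ← add_smul, hab, one_smul]
    rw [hzx, ← hxy] at *
    exact hx
  -- distances
  have h1 : dist x (T z) ≤ dist x z := by
    have := hT x hxC z hzC
    rw [hx] at this
    simpa [dist_eq_norm] using this
  have h2 : dist (T z) y ≤ dist z y := by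
    have := hT z hzC y hyC
    rw [hy] at this
    simpa [dist_eq_norm] using this
  have hzsum : dist x z + dist z y = dist x y :=
    dist_add_dist_eq_iff.2 (mem_segment_iff_wbtw.1 hzseg)
  have htri : dist x y ≤ dist x (T z) + dist (T z) y := dist_triangle _ _ _
  have hsum : dist x (T z) + dist (T z) y = dist x y :=
    le_antisymm (hzsum ▸ add_le_add h1 h2) htri
  have hTzseg : T z ∈ segment ℝ x y :=
    mem_segment_iff_wbtw.2 (dist_add_dist_eq_iff.1 hsum)
  have hd1 : dist x (T z) = dist x z := by linarith
  -- both points in segment with same distance to x ⇒ equal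
  rw [segment_eq_image' ℝ x y] at hTzseg hzseg
  obtain ⟨t, ⟨ht0, ht1⟩, hTz⟩ := hTzseg
  obtain ⟨s, ⟨hs0, hs1⟩, hzz⟩ := hzseg
  have hne : ‖y - x‖ ≠ 0 := by
    simpa [sub_eq_zero] using fun h => hxy h.symm
  have hdt : dist x (T z) = t * ‖y - x‖ := by
    rw [← hTz, dist_eq_norm]
    simp [norm_smul, abs_of_nonneg ht0, norm_sub_rev]
  have hds : dist x z = s * ‖y - x‖ := by
    rw [← hzz, dist_eq_norm]
    simp [norm_smul, abs_of_nonneg hs0, norm_sub_rev]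
  have hts : t = s := by
    have : t * ‖y - x‖ = s * ‖y - x‖ := by rw [← hdt, ← hds, hd1]
    exact mul_right_cancel₀ hne this
  rw [← hTz, ← hzz, hts]
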